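/- Let X₁, X₂, … be independent, identically distributed real random variables with mean μ > 0 and standard deviation at most cμ, where c > 0 is a known constant, and fix ε > 0 and δ ∈ (0,1). Set m = ⌈8(c/ε)²⌉ and k = max(⌈ln(1/δ)/ln(16/7)⌉, 5). For j = 1,…,2k+1 let Wⱼ be the average of the j-th disjoint block of m samples of the sequence. Then the estimate μ̂ = median{W₁, …, W_{2k+1}} satisfies P(|μ̂ − μ| > εμ) ≤ δ, and μ̂ uses m(2k+1) = ⌈8(c/ε)²⌉(2·max(⌈ln(1/δ)/ln(16/7)⌉,5)+1) samples. -/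

import Mathlib

open MeasureTheory ProbabilityTheory Real

/-- The uniform probability measure on the interval `[a, b]`. -/
noncomputable def uniformIcc (a b : ℝ) : Measure ℝ :=
  (ENNReal.ofReal (b - a))⁻¹ • (MeasureTheory.volume.restrict (Set.Icc a b))

/-- The median of `2*n+1` real values: their `(n+1)`-st smallest value. -/
noncomputable def medianOf {n : ℕ} (v : Fin (2 * n + 1) → ℝ) : ℝ :=
  (Multiset.sort (↑(List.ofFn v)) (· ≤ ·)).get ⟨n, by simp; omega⟩

/-- The nuisance factor `f(ε) = (1+ε)/((1-ε)² (1+ε-ε²))`. -/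
noncomputable def nuisance (ε : ℝ) : ℝ := (1 + ε) / ((1 - ε) ^ 2 * (1 + ε - ε ^ 2))

/-!
Since `m ≥ 8 (c/ε)²`, Chebyshev's inequality shows that each block mean `Wⱼ` misses `μ` by more
than `εμ` with probability at most `1/8`. If the median misses, then so do at least `k + 1` of the
`2k + 1` independent block means. Markov's inequality for `∏ⱼ 7 ^ 𝟙[Wⱼ misses]`, whose mean is at
most `(1 + 6/8) ^ (2k + 1)`, bounds the probability of that by
`(7/4) ^ (2k + 1) / 7 ^ (k + 1) = (7/16) ^ k / 4 ≤ δ`.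
-/

open Finset

theorem List.Pairwise.length_sub_le_countP_getElem_le {α : Type*} [Preorder α] [DecidableLE α]
    {L : List α} (hL : L.Pairwise (· ≤ ·)) {i : ℕ} (hi : i < L.length) :
    L.length - i ≤ L.countP (fun x ↦ L[i] ≤ x) := by
  have hdrop : ∀ x ∈ L.drop i, L[i] ≤ x := by
    have := hL.drop (i := i)
    rw [List.drop_eq_getElem_cons hi, List.pairwise_cons] at this
    rw [List.drop_eq_getElem_cons hi, List.forall_mem_cons]
    exact ⟨le_rfl, this.1⟩
  calc L.length - i = (L.drop i).countP (fun x ↦ L[i] ≤ x) := by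
        rw [List.countP_eq_length.2 (by simpa using hdrop), List.length_drop]
    _ ≤ _ := (List.drop_sublist i L).countP_le

theorem List.Pairwise.succ_le_countP_le_getElem {α : Type*} [Preorder α] [DecidableLE α]
    {L : List α} (hL : L.Pairwise (· ≤ ·)) {i : ℕ} (hi : i < L.length) :
    i + 1 ≤ L.countP (fun x ↦ x ≤ L[i]) := by
  have htake : ∀ x ∈ L.take (i + 1), x ≤ L[i] := by
    have := hL.take (i := i + 1)
    rw [List.take_succ_eq_append_getElem hi, List.pairwise_append] at this
    rw [List.take_succ_eq_append_getElem hi, List.forall_mem_append, List.forall_mem_singleton]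
    exact ⟨fun x hx ↦ this.2.2 x hx _ (List.mem_singleton_self _), le_rfl⟩
  calc i + 1 = (L.take (i + 1)).countP (fun x ↦ x ≤ L[i]) := by
        rw [List.countP_eq_length.2 (by simpa using htake), List.length_take]
        omega
    _ ≤ _ := (List.take_sublist _ L).countP_le

theorem card_filter_eq_countP_sort_ofFn {α : Type*} [LinearOrder α] {n : ℕ} (v : Fin n → α)
    (p : α → Prop) [DecidablePred p] :
    #{j | p (v j)} = (Multiset.sort (↑(List.ofFn v)) (· ≤ ·)).countP (fun x ↦ p x) := by
  rw [← Multiset.coe_countP, Multiset.sort_eq, ← Fin.univ_val_map, Multiset.countP_map]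
  rfl

theorem succ_le_card_filter_medianOf_le {n : ℕ} (v : Fin (2 * n + 1) → ℝ) :
    n + 1 ≤ #{j | medianOf v ≤ v j} := by
  have hL := Multiset.pairwise_sort (↑(List.ofFn v) : Multiset ℝ) (· ≤ ·)
  have hlen : (Multiset.sort (↑(List.ofFn v) : Multiset ℝ) (· ≤ ·)).length = 2 * n + 1 := by
    simp
  rw [card_filter_eq_countP_sort_ofFn v (medianOf v ≤ ·)]
  exact (by omega : n + 1 ≤ _ - n).trans (hL.length_sub_le_countP_getElem_le (by omega))

theorem succ_le_card_filter_le_medianOf {n : ℕ} (v : Fin (2 * n + 1) → ℝ) :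
    n + 1 ≤ #{j | v j ≤ medianOf v} := by
  have hL := Multiset.pairwise_sort (↑(List.ofFn v) : Multiset ℝ) (· ≤ ·)
  rw [card_filter_eq_countP_sort_ofFn v (· ≤ medianOf v)]
  exact hL.succ_le_countP_le_getElem (by simp; omega)

theorem succ_le_card_filter_of_lt_abs_medianOf_sub {n : ℕ} (v : Fin (2 * n + 1) → ℝ) {a t : ℝ}
    (h : t < |medianOf v - a|) : n + 1 ≤ #{j | t < |v j - a|} := by
  rcases lt_abs.1 h with h | h
  · refine (succ_le_card_filter_medianOf_le v).trans (card_le_card fun j hj ↦ ?_)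
    simp only [mem_filter_univ] at hj ⊢
    exact h.trans_le ((sub_le_sub_right hj a).trans (le_abs_self _))
  · rw [neg_sub] at h
    refine (succ_le_card_filter_le_medianOf v).trans (card_le_card fun j hj ↦ ?_)
    simp only [mem_filter_univ] at hj ⊢
    exact h.trans_le ((sub_le_sub_left hj a).trans ((le_abs_self _).trans_eq (abs_sub_comm _ _)))

theorem one_div_le_pow_of_log_one_div_div_log_le {a δ : ℝ} (ha : 1 < a) (hδ : 0 < δ) {k : ℕ}
    (hk : Real.log (1 / δ) / Real.log a ≤ k) : 1 / δ ≤ a ^ k := by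
  rw [div_le_iff₀ (Real.log_pos ha), ← Real.log_pow] at hk
  exact (Real.log_le_log_iff (by positivity) (by positivity)).1 hk

theorem seven_fourths_pow_div_seven_pow_le {δ : ℝ} (hδ : 0 < δ) {k : ℕ}
    (hk : Real.log (1 / δ) / Real.log (16 / 7) ≤ k) :
    (7 / 4 : ℝ) ^ (2 * k + 1) / 7 ^ (k + 1) ≤ δ := by
  have hk' := one_div_le_pow_of_log_one_div_div_log_le (by norm_num) hδ hk
  calc (7 / 4 : ℝ) ^ (2 * k + 1) / 7 ^ (k + 1) = ((16 / 7 : ℝ) ^ k)⁻¹ / 4 := by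
        rw [pow_succ, pow_succ, pow_mul, ← inv_pow,
          show (7 / 4 : ℝ) ^ 2 = 7 * (16 / 7)⁻¹ by norm_num, mul_pow]
        field_simp
    _ ≤ ((16 / 7 : ℝ) ^ k)⁻¹ := by linarith [show 0 ≤ ((16 / 7 : ℝ) ^ k)⁻¹ by positivity]
    _ ≤ δ := inv_le_of_inv_le₀ hδ (by simpa using hk')

namespace ProbabilityTheory

variable {Ω ι κ β : Type*} {mΩ : MeasurableSpace Ω} {P : Measure Ω} [MeasurableSpace β]

theorem iIndepFun.curry {X : ι × κ → Ω → β} (mX : ∀ p, Measurable (X p)) (h : iIndepFun X P) :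
    iIndepFun (fun i ω j ↦ X (i, j) ω) P := by
  have := h.isProbabilityMeasure
  have : ∀ p, IsProbabilityMeasure (P.map (X p)) := fun p ↦
    Measure.isProbabilityMeasure_map (mX p).aemeasurable
  have hrow : ∀ i, P.map (fun ω j ↦ X (i, j) ω) = Measure.infinitePi (fun j ↦ P.map (X (i, j))) :=
    fun i ↦ (h.precomp (Prod.mk_right_injective i)).map_fun_eq_infinitePi_map fun j ↦ mX _
  rw [iIndepFun_iff_map_fun_eq_infinitePi_map (fun i ↦ by fun_prop)]
  simp_rw [hrow]
  rw [← Measure.infinitePi_map_curry (fun i j ↦ P.map (X (i, j))),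
    ← h.map_fun_eq_infinitePi_map mX, Measure.map_map (by fun_prop) (by fun_prop)]
  rfl

theorem iIndepFun.blocks {X : ℕ → Ω → β} (mX : ∀ i, Measurable (X i)) (h : iIndepFun X P)
    (m : ℕ) : iIndepFun (fun j ω (l : Fin m) ↦ X (j * m + l) ω) P := by
  have hinj : Function.Injective fun p : ℕ × Fin m ↦ p.1 * m + p.2 := by
    rcases m.eq_zero_or_pos with rfl | hm
    · exact fun p ↦ p.2.elim0
    · have : NeZero m := ⟨hm.ne'⟩
      exact (Nat.divModEquiv m).symm.injective
  exact (h.precomp hinj).curry fun _ ↦ mX _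

theorem iIndepFun.iIndepSet_preimage {Y : ι → Ω → β} (h : iIndepFun Y P) {B : Set β}
    (hB : MeasurableSet B) : iIndepSet (fun i ↦ Y i ⁻¹' B) P := by
  rw [iIndepSet_iff_iIndep]
  exact iIndep_of_iIndep_of_le h.iIndep fun i ↦ MeasurableSpace.generateFrom_le
    fun s hs ↦ (Set.mem_singleton_iff.1 hs) ▸ ⟨B, hB, rfl⟩

theorem iIndepFun.iIndepSet_sum_block_mem {X : ℕ → Ω → ℝ} (mX : ∀ i, Measurable (X i))
    (h : iIndepFun X P) (m : ℕ) {S : Set ℝ} (hS : MeasurableSet S) :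
    iIndepSet (fun j ↦ {ω | ∑ l ∈ range m, X (j * m + l) ω ∈ S}) P := by
  convert (h.blocks mX m).iIndepSet_preimage (B := {y | ∑ l, y l ∈ S}) (hS.preimage (by fun_prop))
    using 2 with j
  ext ω
  simp [Fin.sum_univ_eq_sum_range (fun l ↦ X (j * m + l) ω)]

theorem measure_le_abs_sum_div_card_sub_le [IsFiniteMeasure P] {X : ι → Ω → ℝ} {s : Finset ι}
    (hs : s.Nonempty) (hX : ∀ i ∈ s, MemLp (X i) 2 P)
    (hindep : Set.Pairwise ↑s fun i j ↦ X i ⟂ᵢ[P] X j) {μ v t : ℝ}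
    (hmean : ∀ i ∈ s, P[X i] = μ) (hvar : ∀ i ∈ s, variance (X i) P ≤ v) (ht : 0 < t) :
    P {ω | t ≤ |(∑ i ∈ s, X i ω) / #s - μ|} ≤ ENNReal.ofReal (v / (#s * t ^ 2)) := by
  have hn : (0 : ℝ) < #s := by exact_mod_cast hs.card_pos
  set A : Ω → ℝ := fun ω ↦ (#s : ℝ)⁻¹ * ∑ i ∈ s, X i ω with hA
  have hAsum : A = fun ω ↦ (#s : ℝ)⁻¹ * (∑ i ∈ s, X i) ω := by simp [hA]
  have hA2 : MemLp A 2 P := hAsum ▸ (memLp_finsetSum' s hX).const_mul _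
  have hmeanA : P[A] = μ := by
    rw [integral_const_mul, integral_finsetSum s fun i hi ↦ (hX i hi).integrable one_le_two,
      sum_congr rfl hmean, sum_const, nsmul_eq_mul]
    field_simp
  have hvarA : variance A P ≤ v / #s := by
    rw [hAsum, variance_const_mul, IndepFun.variance_sum hX hindep]
    calc ((#s : ℝ)⁻¹) ^ 2 * ∑ i ∈ s, variance (X i) P ≤ ((#s : ℝ)⁻¹) ^ 2 * (#s * v) := by
          gcongr
          exact (sum_le_sum hvar).trans_eq (by rw [sum_const, nsmul_eq_mul])
      _ = v / #s := by field_simp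
  calc P {ω | t ≤ |(∑ i ∈ s, X i ω) / #s - μ|} = P {ω | t ≤ |A ω - P[A]|} := by
        rw [hmeanA]
        simp only [hA, inv_mul_eq_div]
    _ ≤ ENNReal.ofReal (variance A P / t ^ 2) := meas_ge_le_variance_div_sq hA2 ht
    _ ≤ ENNReal.ofReal (v / (#s * t ^ 2)) := by
        rw [← div_div]
        exact ENNReal.ofReal_le_ofReal (div_le_div_of_nonneg_right hvarA (sq_nonneg t))

theorem measureReal_lt_abs_block_mean_sub_le [IsFiniteMeasure P] {X : ℕ → Ω → ℝ}
    (hX : ∀ i, MemLp (X i) 2 P) (hindep : iIndepFun X P) {μ v t : ℝ} (hmean : ∀ i, P[X i] = μ)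
    (hvar : ∀ i, variance (X i) P ≤ v) (ht : 0 < t) {m : ℕ} (hm : 0 < m) (a : ℕ) :
    P.real {ω | t < |(∑ l ∈ range m, X (a + l) ω) / m - μ|} ≤ v / (m * t ^ 2) := by
  have hcheb := measure_le_abs_sum_div_card_sub_le (X := fun l ↦ X (a + l))
    (nonempty_range_iff.2 hm.ne') (fun _ _ ↦ hX _) (fun i _ j _ hij ↦ hindep.indepFun (by omega))
    (fun _ _ ↦ hmean _) (fun _ _ ↦ hvar _) ht
  rw [card_range] at hcheb
  have hv : 0 ≤ v := (variance_nonneg _ _).trans (hvar 0)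
  exact ENNReal.toReal_le_of_le_ofReal (by positivity)
    ((measure_mono fun ω hω ↦ (show t < _ from hω).le).trans hcheb)

theorem measure_le_card_filter_mem_le [Fintype ι] {A : ι → Set Ω} [∀ i, DecidablePred (· ∈ A i)]
    (hA : iIndepSet A P) (hAm : ∀ i, MeasurableSet (A i)) {p b : ℝ} (hb : 1 ≤ b)
    (hp : ∀ i, P.real (A i) ≤ p) (r : ℕ) :
    P {ω | r ≤ #{i | ω ∈ A i}} ≤ ENNReal.ofReal ((1 + (b - 1) * p) ^ Fintype.card ι / b ^ r) := by
  have := hA.isProbabilityMeasure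
  have hb0 : 0 ≤ b - 1 := sub_nonneg.2 hb
  set g : ι → Ω → ℝ := fun i ω ↦ 1 + (b - 1) * (A i).indicator 1 ω with hg
  have hgm : ∀ i, Measurable (g i) := fun i ↦
    ((measurable_one.indicator (hAm i)).const_mul _).const_add _
  have hgind : iIndepFun g P :=
    hA.iIndepFun_indicator.comp (fun _ x ↦ 1 + (b - 1) * x) fun _ ↦ by fun_prop
  have hprod : ∀ ω, ∏ i, g i ω = b ^ #{i | ω ∈ A i} := by
    intro ω
    have : ∀ i, g i ω = if ω ∈ A i then b else 1 := fun i ↦ by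
      by_cases h : ω ∈ A i <;> simp [hg, h]
    simp only [this, prod_ite, prod_const, one_pow, mul_one]
  have hmean : ∀ i, P[g i] = 1 + (b - 1) * P.real (A i) := fun i ↦ by
    rw [integral_add (integrable_const _) (((integrable_const 1).indicator (hAm i)).const_mul _),
      integral_const_mul, integral_indicator_one (hAm i)]
    simp
  have hmoment : P[fun ω ↦ ∏ i, g i ω] ≤ (1 + (b - 1) * p) ^ Fintype.card ι := by
    rw [hgind.integral_fun_prod_eq_prod_integral fun i ↦ (hgm i).aestronglyMeasurable,
      ← Finset.card_univ, ← prod_const]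
    refine prod_le_prod (fun i _ ↦ ?_) fun i _ ↦ ?_ <;> rw [hmean]
    · positivity
    · gcongr
      exact hp i
  have hmarkov := mul_meas_ge_le_integral_of_nonneg (μ := P) (f := fun ω ↦ ∏ i, g i ω)
    (.of_forall fun ω ↦ by simp only [hprod]; positivity)
    (.of_bound (by fun_prop) (b ^ Fintype.card ι) (.of_forall fun ω ↦ by
      rw [hprod, Real.norm_of_nonneg (by positivity)]
      exact pow_le_pow_right₀ hb (card_le_univ _))) (b ^ r)
  have hsub : {ω | r ≤ #{i | ω ∈ A i}} ⊆ {ω | b ^ r ≤ ∏ i, g i ω} := fun ω hω ↦ by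
    simp only [Set.mem_ofPred_eq, hprod] at hω ⊢
    exact pow_le_pow_right₀ hb hω
  calc P {ω | r ≤ #{i | ω ∈ A i}} ≤ P {ω | b ^ r ≤ ∏ i, g i ω} := measure_mono hsub
    _ = ENNReal.ofReal (P.real {ω | b ^ r ≤ ∏ i, g i ω}) := by rw [ofReal_measureReal]
    _ ≤ _ := by
      refine ENNReal.ofReal_le_ofReal ?_
      rw [le_div_iff₀ (by positivity), mul_comm]
      exact hmarkov.trans hmoment

end ProbabilityTheory

theorem median_of_means {Ω : Type*} [MeasureSpace Ω]
    [IsProbabilityMeasure (ℙ : Measure Ω)]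
    (c μ ε δ : ℝ) (hc : 0 < c) (hμ : 0 < μ) (hε : 0 < ε) (hδ : δ ∈ Set.Ioo (0 : ℝ) 1)
    (m k : ℕ) (hm : m = ⌈8 * (c / ε) ^ 2⌉₊)
    (hk : k = max ⌈Real.log (1 / δ) / Real.log (16 / 7)⌉₊ 5)
    (X : ℕ → Ω → ℝ) (hXm : ∀ i, Measurable (X i))
    (hindep : iIndepFun X ℙ)
    (hX2 : ∀ i, MemLp (X i) 2 ℙ)
    (hmean : ∀ i, ∫ ω, X i ω ∂ℙ = μ)
    (hsd : ∀ i, Real.sqrt (variance (X i) ℙ) ≤ c * μ) :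
    ℙ {ω | ε * μ <
        |medianOf (fun j : Fin (2 * k + 1) =>
          (∑ l ∈ Finset.range m, X (j.val * m + l) ω) / m) - μ|} ≤ ENNReal.ofReal δ ∧
      m * (2 * k + 1) =
        ⌈8 * (c / ε) ^ 2⌉₊ * (2 * max ⌈Real.log (1 / δ) / Real.log (16 / 7)⌉₊ 5 + 1) := by
  refine ⟨?_, by rw [hm, hk]⟩
  have hm0 : 0 < m := hm ▸ Nat.ceil_pos.2 (by positivity)
  have hvar : ∀ i, variance (X i) ℙ ≤ (c * μ) ^ 2 :=
    fun i ↦ (Real.sqrt_le_left (by positivity)).1 (hsd i)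
  have hcheb_le : (c * μ) ^ 2 / (m * (ε * μ) ^ 2) ≤ 1 / 8 := by
    have hm8 : 8 * (c / ε) ^ 2 ≤ m := hm ▸ Nat.le_ceil _
    have : (c * μ) ^ 2 = (c / ε) ^ 2 * (ε * μ) ^ 2 := by field_simp
    rw [div_le_iff₀ (by positivity)]
    nlinarith [sq_nonneg (ε * μ)]
  set A : Fin (2 * k + 1) → Set Ω :=
    fun j ↦ {ω | ε * μ < |(∑ l ∈ range m, X (j * m + l) ω) / m - μ|}
  have hAind : iIndepSet A ℙ := (hindep.iIndepSet_sum_block_mem hXm m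
    (S := {x | ε * μ < |x / m - μ|}) (measurableSet_lt measurable_const (by fun_prop))).precomp
    Fin.val_injective
  have hAm : ∀ j, MeasurableSet (A j) := fun j ↦ measurableSet_lt measurable_const (by fun_prop)
  have hAbound : ∀ j, (ℙ : Measure Ω).real (A j) ≤ 1 / 8 := fun j ↦
    (measureReal_lt_abs_block_mean_sub_le hX2 hindep hmean hvar (by positivity) hm0 _).trans
      hcheb_le
  have hkδ : Real.log (1 / δ) / Real.log (16 / 7) ≤ k :=
    hk ▸ (Nat.le_ceil _).trans (by exact_mod_cast le_max_left _ _)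
  calc _ ≤ ℙ {ω | k + 1 ≤ #{j | ω ∈ A j}} := measure_mono fun ω ↦
        succ_le_card_filter_of_lt_abs_medianOf_sub _
    _ ≤ ENNReal.ofReal ((7 / 4) ^ (2 * k + 1) / 7 ^ (k + 1)) := by
        convert measure_le_card_filter_mem_le hAind hAm (b := 7) (by norm_num) hAbound (k + 1)
          using 4 <;> norm_num
    _ ≤ ENNReal.ofReal δ :=
        ENNReal.ofReal_le_ofReal (seven_fourths_pow_div_seven_pow_le hδ.1 hkδ)
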